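/- Let V be a real vector space, let I : V → V be a linear map, and let Q : V* → V be a linear map. Define 𝕁_{I,Q} : V × V* → V × V* by 𝕁_{I,Q}(x, ξ) = (-Ix + Qξ, ξ ∘ I). Then 𝕁_{I,Q} is a linear generalized complex structure on V (i.e., 𝕁_{I,Q} ∘ 𝕁_{I,Q} = -id and 𝕁_{I,Q} preserves the natural pairing) if and only if: I ∘ I = -id, I ∘ Q = Q ∘ I* (where I* ξ = ξ ∘ I), and Q is skew (ξ(Qη) = -η(Qξ) for all ξ, η ∈ V*). -/

import Mathlib

/-- The block upper-triangular map `𝕁_{I,Q} : (x, ξ) ↦ (-Ix + Qξ, ξ ∘ I)`. -/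
def Jblock {V : Type*} [AddCommGroup V] [Module ℝ V]
    (I : V →ₗ[ℝ] V) (Q : Module.Dual ℝ V →ₗ[ℝ] V) (p : V × Module.Dual ℝ V) :
    V × Module.Dual ℝ V :=
  (-(I p.1) + Q p.2, LinearMap.comp p.2 I)

/-- The natural pairing `⟨(x, ξ), (y, η)⟩ = ξ(y) + η(x)` on `V × V*`. -/
def natPairing {V : Type*} [AddCommGroup V] [Module ℝ V]
    (p q : V × Module.Dual ℝ V) : ℝ :=
  p.2 q.1 + q.2 p.1

/-!
Squaring the block matrix gives `𝕁² = [[I², -IQ + QI*], [0, I*²]]`, so `𝕁² = -1` is exactly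
`I² = -1` together with `IQ = QI*`. Once `I² = -1`, the pairing of `𝕁(x, ξ)` with `𝕁(y, η)` is
`ξ(y) + η(x) + ξ(IQη) + η(IQξ)`, so `𝕁` is orthogonal iff `IQ` is skew. Finally, since `IQ = QI*`
and `I*² = -1`, substituting `I*η` for `η` turns skewness of `IQ` into skewness of `Q` and back.
-/

open Module

namespace LinearMap

variable {R V : Type*} [CommRing R] [AddCommGroup V] [Module R V]

def IsSkew (Q : Dual R V →ₗ[R] V) : Prop :=
  ∀ ξ η : Dual R V, ξ (Q η) = -η (Q ξ)

theorem isSkew_comp_iff {I : V →ₗ[R] V} {Q : Dual R V →ₗ[R] V}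
    (hI : ∀ x, I (I x) = -x) (hQ : ∀ ξ, I (Q ξ) = Q (ξ ∘ₗ I)) :
    (I ∘ₗ Q).IsSkew ↔ Q.IsSkew := by
  have hIQI (η : Dual R V) : I (Q (η ∘ₗ I)) = -Q η := by rw [← hQ, hI]
  constructor
  · intro h ξ η
    calc ξ (Q η) = -ξ ((I ∘ₗ Q) (η ∘ₗ I)) := by rw [comp_apply, hIQI, map_neg, neg_neg]
      _ = (η ∘ₗ I) ((I ∘ₗ Q) ξ) := by rw [h, neg_neg]
      _ = -η (Q ξ) := by rw [comp_apply, comp_apply, hI, map_neg]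
  · intro h ξ η
    calc ξ ((I ∘ₗ Q) η) = ξ (Q (η ∘ₗ I)) := by rw [comp_apply, hQ]
      _ = -η ((I ∘ₗ Q) ξ) := h ξ _

end LinearMap

section Jblock

variable {V : Type*} [AddCommGroup V] [Module ℝ V] (I : V →ₗ[ℝ] V) (Q : Dual ℝ V →ₗ[ℝ] V)

theorem Jblock_Jblock (p : V × Dual ℝ V) :
    Jblock I Q (Jblock I Q p) = (I (I p.1) - I (Q p.2) + Q (p.2 ∘ₗ I), (p.2 ∘ₗ I) ∘ₗ I) := by
  simp only [Jblock, map_add, map_neg]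
  congr 1
  abel

theorem natPairing_Jblock (p q : V × Dual ℝ V) :
    natPairing (Jblock I Q p) (Jblock I Q q) =
      -p.2 (I (I q.1)) + p.2 (I (Q q.2)) - q.2 (I (I p.1)) + q.2 (I (Q p.2)) := by
  simp only [Jblock, natPairing, LinearMap.comp_apply, map_add, map_neg]
  ring

theorem Jblock_Jblock_eq_neg_iff :
    (∀ p, Jblock I Q (Jblock I Q p) = -p) ↔
      (∀ x, I (I x) = -x) ∧ ∀ ξ, I (Q ξ) = Q (ξ ∘ₗ I) := by
  constructor
  · intro h
    refine ⟨fun x => by simpa [Jblock_Jblock] using h (x, 0), fun ξ => ?_⟩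
    have h0 := congrArg Prod.fst (h (0, ξ))
    simp only [Jblock_Jblock, map_zero, zero_sub, Prod.fst_neg, neg_zero] at h0
    rwa [neg_add_eq_zero] at h0
  · rintro ⟨hI, hQ⟩ p
    ext x
    · simp [Jblock_Jblock, hI, hQ]
    · simp [Jblock_Jblock, hI]

theorem natPairing_Jblock_eq_iff (hI : ∀ x, I (I x) = -x) :
    (∀ p q, natPairing (Jblock I Q p) (Jblock I Q q) = natPairing p q) ↔ (I ∘ₗ Q).IsSkew := by
  have hpair (p q : V × Dual ℝ V) :
      natPairing (Jblock I Q p) (Jblock I Q q) =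
        natPairing p q + p.2 ((I ∘ₗ Q) q.2) + q.2 ((I ∘ₗ Q) p.2) := by
    rw [natPairing_Jblock, natPairing, hI, hI, LinearMap.comp_apply, LinearMap.comp_apply]
    simp only [map_neg]
    ring
  simp only [hpair, add_assoc, add_eq_left]
  constructor
  · intro h ξ η
    simpa [natPairing, eq_neg_iff_add_eq_zero] using h (0, ξ) (0, η)
  · intro h p q
    rw [h, neg_add_cancel]

end Jblock

theorem Jblock_gcs_iff
    {V : Type*} [AddCommGroup V] [Module ℝ V]
    (I : V →ₗ[ℝ] V) (Q : Module.Dual ℝ V →ₗ[ℝ] V) :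
    ((∀ p : V × Module.Dual ℝ V, Jblock I Q (Jblock I Q p) = -p) ∧
      (∀ p q : V × Module.Dual ℝ V,
        natPairing (Jblock I Q p) (Jblock I Q q) = natPairing p q))
    ↔ ((∀ x : V, I (I x) = -x) ∧
        (∀ ξ : Module.Dual ℝ V, I (Q ξ) = Q (LinearMap.comp ξ I)) ∧
        (∀ ξ η : Module.Dual ℝ V, ξ (Q η) = -η (Q ξ))) := by
  rw [Jblock_Jblock_eq_neg_iff, and_assoc]
  refine and_congr_right fun hI => and_congr_right fun hQ => ?_
  rw [natPairing_Jblock_eq_iff I Q hI, LinearMap.isSkew_comp_iff hI hQ]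
  rfl
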